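/- For any dyadic cube Q of an n-dimensional AD regular measure μ in ℝ^d, there exist n+1 points x₀,…,x_n ∈ Q such that dist(x_j, L_{j−1}) ≥ C⁻¹ ℓ(Q) for j = 1,…,n, where L_k is the affine k-plane through x₀,…,x_k, and C depends only on n and the AD-regularity constant. -/

import Mathlib

open MeasureTheory Metric Set
open scoped ENNReal NNReal RealInnerProductSpace

noncomputable section

/-- The Lipschitz-test distance between two measures: the supremum of
`|∫ f dσ - ∫ f dν|` over `1`-Lipschitz functions `f` supported in `B`. -/
def distB {d : ℕ} (B : Set (EuclideanSpace ℝ (Fin d)))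
    (σ ν : Measure (EuclideanSpace ℝ (Fin d))) : ℝ :=
  sSup {r | ∃ f : EuclideanSpace ℝ (Fin d) → ℝ, LipschitzWith 1 f ∧ tsupport f ⊆ B ∧
    r = |∫ x, f x ∂σ - ∫ x, f x ∂ν|}

/-- The support of a measure, described as the set of points all whose closed balls
have positive measure. -/
def suppSet {d : ℕ} (μ : Measure (EuclideanSpace ℝ (Fin d))) :
    Set (EuclideanSpace ℝ (Fin d)) :=
  {x | ∀ r : ℝ, 0 < r → 0 < μ (closedBall x r)}

/-- `μ` is `n`-dimensional Ahlfors-David regular with constant `C₀`. -/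
def IsADRegular {d : ℕ} (n : ℕ) (C₀ : ℝ) (μ : Measure (EuclideanSpace ℝ (Fin d))) : Prop :=
  ∀ x ∈ suppSet μ, ∀ r : ℝ, 0 < r → ENNReal.ofReal r ≤ EMetric.diam (suppSet μ) →
    ENNReal.ofReal (C₀⁻¹ * r ^ n) ≤ μ (closedBall x r) ∧
      μ (closedBall x r) ≤ ENNReal.ofReal (C₀ * r ^ n)

/-- An `n`-dimensional affine plane in `ℝ^d`. -/
def IsNPlane {d : ℕ} (n : ℕ) (L : AffineSubspace ℝ (EuclideanSpace ℝ (Fin d))) : Prop :=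
  (L : Set (EuclideanSpace ℝ (Fin d))).Nonempty ∧ Module.finrank ℝ L.direction = n

/-- The flat measure `c · H^n|_L`. -/
def flatMeasure {d : ℕ} (n : ℕ) (c : ℝ) (L : AffineSubspace ℝ (EuclideanSpace ℝ (Fin d))) :
    Measure (EuclideanSpace ℝ (Fin d)) :=
  ENNReal.ofReal c • (μH[(n : ℝ)]).restrict (L : Set (EuclideanSpace ℝ (Fin d)))

/-- A David–Christ lattice of "dyadic cubes" associated to an `n`-dimensional AD regular
measure `μ` on `ℝ^d` with regularity constant `C₀`. -/
structure DyadicLattice (d n : ℕ) (C₀ : ℝ) (μ : Measure (EuclideanSpace ℝ (Fin d))) where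
  Cube : Type
  countable : Countable Cube
  gen : Cube → ℤ
  carrier : Cube → Set (EuclideanSpace ℝ (Fin d))
  center : Cube → EuclideanSpace ℝ (Fin d)
  inj : Function.Injective fun Q => (gen Q, carrier Q)
  center_mem : ∀ Q, center Q ∈ carrier Q
  carrier_subset_supp : ∀ Q, carrier Q ⊆ suppSet μ
  subset_ball : ∀ Q, carrier Q ⊆ closedBall (center Q) ((2:ℝ) ^ (-gen Q))
  diam_le : ∀ Q, Metric.diam (carrier Q) ≤ (2:ℝ) ^ (-gen Q)
  nested : ∀ P Q, gen Q ≤ gen P → (carrier P ∩ carrier Q).Nonempty → carrier P ⊆ carrier Q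
  disj : ∀ P Q, gen P = gen Q → P ≠ Q → carrier P ∩ carrier Q = ∅
  covers : ∀ j : ℤ, ∀ x ∈ suppSet μ, ∃ Q, gen Q = j ∧ x ∈ carrier Q
  measure_lb : ∀ Q, ENNReal.ofReal (C₀⁻¹ * ((2:ℝ) ^ (-gen Q)) ^ n) ≤ μ (carrier Q)
  measure_ub : ∀ Q, μ (carrier Q) ≤ ENNReal.ofReal (C₀ * ((2:ℝ) ^ (-gen Q)) ^ n)

namespace DyadicLattice

variable {d n : ℕ} {C₀ : ℝ} {μ : Measure (EuclideanSpace ℝ (Fin d))}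

/-- The side length `ℓ(Q) = 2^{-j}` of a cube of generation `j`. -/
def sl (D : DyadicLattice d n C₀ μ) (Q : D.Cube) : ℝ := (2:ℝ) ^ (-D.gen Q)

/-- The ball `B_Q = B(z_Q, 3 ℓ(Q))`. -/
def bigBall (D : DyadicLattice d n C₀ μ) (Q : D.Cube) : Set (EuclideanSpace ℝ (Fin d)) :=
  closedBall (D.center Q) (3 * D.sl Q)

/-- The flatness coefficient
`α(Q) = ℓ(Q)^{-(n+1)} inf_{c ≥ 0, L n-plane} dist_{B_Q}(μ, c H^n|_L)`. -/
def alpha (D : DyadicLattice d n C₀ μ) (Q : D.Cube) : ℝ :=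
  (sInf {r | ∃ c : ℝ, 0 ≤ c ∧ ∃ L : AffineSubspace ℝ (EuclideanSpace ℝ (Fin d)),
      IsNPlane n L ∧ r = distB (D.bigBall Q) μ (flatMeasure n c L)}) / D.sl Q ^ (n + 1)

/-- `(c, L)` is a minimizing pair in the definition of `α(Q)`, with `L ∩ B_Q ≠ ∅`. -/
def IsAlphaMin (D : DyadicLattice d n C₀ μ) (Q : D.Cube) (c : ℝ)
    (L : AffineSubspace ℝ (EuclideanSpace ℝ (Fin d))) : Prop :=
  0 ≤ c ∧ IsNPlane n L ∧
    ((L : Set (EuclideanSpace ℝ (Fin d))) ∩ D.bigBall Q).Nonempty ∧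
    ∀ (c' : ℝ) (L' : AffineSubspace ℝ (EuclideanSpace ℝ (Fin d))), 0 ≤ c' → IsNPlane n L' →
      distB (D.bigBall Q) μ (flatMeasure n c L) ≤ distB (D.bigBall Q) μ (flatMeasure n c' L')

/-- The dilated cube `λQ = {x ∈ supp μ : dist(x, Q) ≤ (λ - 1) ℓ(Q)}`. -/
def dilate (D : DyadicLattice d n C₀ μ) (Q : D.Cube) (lam : ℝ) :
    Set (EuclideanSpace ℝ (Fin d)) :=
  {x ∈ suppSet μ | infDist x (D.carrier Q) ≤ (lam - 1) * D.sl Q}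

end DyadicLattice

section Aux

lemma measure_compl_suppSet {d : ℕ} (μ : Measure (EuclideanSpace ℝ (Fin d))) :
    μ (suppSet μ)ᶜ = 0 := by
  apply measure_null_of_locally_null
  intro x hx
  simp only [suppSet, mem_compl_iff, mem_setOf_eq, not_forall] at hx
  obtain ⟨r, hr, hr0⟩ := hx
  refine ⟨closedBall x r, mem_nhdsWithin_of_mem_nhds (closedBall_mem_nhds x hr), ?_⟩
  simpa using hr0

/-- Volume packing bound in a `k`-dimensional Euclidean space. -/
lemma euclidean_packing {k : ℕ} {δ R : ℝ} (hδ : 0 < δ) (hR : 0 ≤ R)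
    (P : Finset (EuclideanSpace ℝ (Fin k)))
    (hPR : ∀ p ∈ P, ‖p‖ ≤ R)
    (hsep : ∀ p ∈ P, ∀ q ∈ P, p ≠ q → δ ≤ dist p q) :
    (P.card : ℝ) * (δ / 2) ^ k ≤ (R + δ / 2) ^ k := by
  rcases Nat.eq_zero_or_pos k with hk | hk
  · subst hk
    simp only [pow_zero, mul_one]
    have : P.card ≤ 1 := by
      refine Finset.card_le_one.2 fun p hp q hq => ?_
      exact Subsingleton.elim p q
    exact_mod_cast this
  haveI : Nontrivial (EuclideanSpace ℝ (Fin k)) := by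
    apply Module.nontrivial_of_finrank_pos (R := ℝ) (M := EuclideanSpace ℝ (Fin k))
    rwa [finrank_euclideanSpace_fin]
  set v := volume (ball (0 : EuclideanSpace ℝ (Fin k)) 1) with hv
  have hv0 : v ≠ 0 := (measure_ball_pos _ _ one_pos).ne'
  have hvt : v ≠ ⊤ := measure_ball_lt_top.ne
  have hdisj : (↑P : Set (EuclideanSpace ℝ (Fin k))).PairwiseDisjoint
      (fun p => ball p (δ / 2)) := by
    intro p hp q hq hpq
    exact ball_disjoint_ball (by linarith [hsep p hp q hq hpq])
  have hmeas : ∀ p ∈ P, MeasurableSet (ball p (δ / 2)) := fun p _ => measurableSet_ball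
  have hsub : (⋃ p ∈ P, ball p (δ / 2)) ⊆ ball 0 (R + δ / 2) := by
    intro x hx
    simp only [mem_iUnion, exists_prop] at hx
    obtain ⟨p, hp, hxp⟩ := hx
    rw [mem_ball] at hxp ⊢
    calc dist x 0 ≤ dist x p + dist p 0 := dist_triangle _ _ _
      _ < δ / 2 + R := by
          have h1 := hPR p hp
          have h2 : dist p 0 = ‖p‖ := by simp [dist_zero_right]
          linarith
      _ = R + δ / 2 := by ring
  have hball : ∀ p : EuclideanSpace ℝ (Fin k), ∀ r : ℝ, 0 ≤ r →
      volume (ball p r) = ENNReal.ofReal (r ^ k) * v := by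
    intro p r hr
    rw [hv, Measure.addHaar_ball volume p hr, finrank_euclideanSpace_fin]
  have key : (P.card : ℝ≥0∞) * (ENNReal.ofReal ((δ / 2) ^ k) * v)
      ≤ ENNReal.ofReal ((R + δ / 2) ^ k) * v := by
    calc (P.card : ℝ≥0∞) * (ENNReal.ofReal ((δ / 2) ^ k) * v)
        = ∑ p ∈ P, ENNReal.ofReal ((δ / 2) ^ k) * v := by
          rw [Finset.sum_const, nsmul_eq_mul]
      _ = ∑ p ∈ P, volume (ball p (δ / 2)) := by
          refine Finset.sum_congr rfl fun p _ => ?_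
          rw [hball p (δ / 2) (by linarith)]
      _ = volume (⋃ p ∈ P, ball p (δ / 2)) := (measure_biUnion_finset hdisj hmeas).symm
      _ ≤ volume (ball 0 (R + δ / 2)) := measure_mono hsub
      _ = ENNReal.ofReal ((R + δ / 2) ^ k) * v := hball _ _ (by linarith)
  rw [← mul_assoc] at key
  have key2 : (P.card : ℝ≥0∞) * ENNReal.ofReal ((δ / 2) ^ k)
      ≤ ENNReal.ofReal ((R + δ / 2) ^ k) :=
    (ENNReal.mul_le_mul_iff_left hv0 hvt).1 key
  have hcast : (P.card : ℝ≥0∞) = ENNReal.ofReal (P.card : ℝ) := by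
    simp
  rw [hcast, ← ENNReal.ofReal_mul (by positivity)] at key2
  exact (ENNReal.ofReal_le_ofReal_iff (by positivity)).1 key2

/-- Packing bound for separated points on an affine subspace of dimension at most `k`. -/
lemma affine_packing {d k : ℕ} {δ R : ℝ} (hδ : 0 < δ) (hR : 0 ≤ R)
    (W : AffineSubspace ℝ (EuclideanSpace ℝ (Fin d)))
    (hk : Module.finrank ℝ W.direction ≤ k)
    (c : EuclideanSpace ℝ (Fin d)) (hc : c ∈ W)
    (P : Finset (EuclideanSpace ℝ (Fin d)))
    (hPW : ∀ p ∈ P, p ∈ W) (hPR : ∀ p ∈ P, dist p c ≤ R)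
    (hsep : ∀ p ∈ P, ∀ q ∈ P, p ≠ q → δ ≤ dist p q) :
    (P.card : ℝ) ≤ (2 * R / δ + 1) ^ k := by
  classical
  set V := W.direction
  haveI : FiniteDimensional ℝ V := inferInstance
  set k' := Module.finrank ℝ V with hk'
  set φ : V ≃ₗᵢ[ℝ] EuclideanSpace ℝ (Fin k') := (stdOrthonormalBasis ℝ V).repr with hφ
  set f : EuclideanSpace ℝ (Fin d) → EuclideanSpace ℝ (Fin k') :=
    fun p => if h : p -ᵥ c ∈ V then φ ⟨p -ᵥ c, h⟩ else 0 with hf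
  have hfval : ∀ p, ∀ hp : p ∈ P, f p = φ ⟨p -ᵥ c, AffineSubspace.vsub_mem_direction (hPW p hp) hc⟩ := by
    intro p hp
    rw [hf]
    exact dif_pos (AffineSubspace.vsub_mem_direction (hPW p hp) hc)
  have hdist : ∀ p ∈ P, ∀ q ∈ P, dist (f p) (f q) = dist p q := by
    intro p hp q hq
    rw [hfval p hp, hfval q hq, φ.dist_map, Subtype.dist_eq]
    have h1 : ((⟨p -ᵥ c, AffineSubspace.vsub_mem_direction (hPW p hp) hc⟩ : V) : EuclideanSpace ℝ (Fin d)) = p -ᵥ c := rfl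
    have h2 : ((⟨q -ᵥ c, AffineSubspace.vsub_mem_direction (hPW q hq) hc⟩ : V) : EuclideanSpace ℝ (Fin d)) = q -ᵥ c := rfl
    rw [h1, h2, dist_eq_norm, dist_eq_norm]
    rw [show (p -ᵥ c) - (q -ᵥ c) = p - q from by rw [vsub_eq_sub, vsub_eq_sub]; abel]
  have hnorm : ∀ p ∈ P, ‖f p‖ ≤ R := by
    intro p hp
    rw [hfval p hp, φ.norm_map]
    have : ‖(⟨p -ᵥ c, AffineSubspace.vsub_mem_direction (hPW p hp) hc⟩ : V)‖ = ‖p -ᵥ c‖ := rfl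
    rw [this]
    simpa [dist_eq_norm, vsub_eq_sub] using hPR p hp
  have hinj : Set.InjOn f ↑P := by
    intro p hp q hq hpq
    by_contra hne
    have := hsep p hp q hq hne
    rw [← hdist p hp q hq, hpq, dist_self] at this
    linarith
  set P' : Finset (EuclideanSpace ℝ (Fin k')) := P.image f with hP'
  have hcard : P'.card = P.card := Finset.card_image_of_injOn hinj
  have hsep' : ∀ a ∈ P', ∀ b ∈ P', a ≠ b → δ ≤ dist a b := by
    intro a ha b hb hab
    rw [hP', Finset.mem_image] at ha hb
    obtain ⟨p, hp, rfl⟩ := ha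
    obtain ⟨q, hq, rfl⟩ := hb
    have hpq : p ≠ q := fun h => hab (by rw [h])
    rw [hdist p hp q hq]
    exact hsep p hp q hq hpq
  have hR' : ∀ a ∈ P', ‖a‖ ≤ R := by
    intro a ha
    rw [hP', Finset.mem_image] at ha
    obtain ⟨p, hp, rfl⟩ := ha
    exact hnorm p hp
  have hmain := euclidean_packing hδ hR P' hR' hsep'
  rw [hcard] at hmain
  have hδ2 : (0:ℝ) < (δ / 2) ^ k' := by positivity
  have h1 : (P.card : ℝ) ≤ ((R + δ / 2) / (δ / 2)) ^ k' := by
    rw [div_pow, le_div_iff₀ hδ2]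
    exact hmain
  have h2 : (R + δ / 2) / (δ / 2) = 2 * R / δ + 1 := by
    field_simp
  rw [h2] at h1
  refine h1.trans ?_
  have hbase : (1:ℝ) ≤ 2 * R / δ + 1 := by
    have : 0 ≤ 2 * R / δ := by positivity
    linarith
  exact pow_le_pow_right₀ hbase (hk'.symm ▸ hk)

variable {d n : ℕ} {C₀ : ℝ} {μ : Measure (EuclideanSpace ℝ (Fin d))}

lemma sl_pos (D : DyadicLattice d n C₀ μ) (Q : D.Cube) : 0 < D.sl Q :=
  zpow_pos (by norm_num) _

lemma center_mem_supp (D : DyadicLattice d n C₀ μ) (Q : D.Cube) :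
    D.center Q ∈ suppSet μ :=
  D.carrier_subset_supp Q (D.center_mem Q)

lemma carrier_subset_closedBall (D : DyadicLattice d n C₀ μ) (Q : D.Cube) :
    D.carrier Q ⊆ closedBall (D.center Q) (D.sl Q) :=
  D.subset_ball Q

/-- The diameter of the support is at least `C₀⁻² ℓ(Q)` for every cube `Q`. -/
lemma diam_supp_lb (hC₀ : 1 ≤ C₀) (hn : 1 ≤ n) (hμ : IsADRegular n C₀ μ)
    (D : DyadicLattice d n C₀ μ) (Q : D.Cube) :
    ENNReal.ofReal (C₀⁻¹ * C₀⁻¹ * D.sl Q) ≤ EMetric.diam (suppSet μ) := by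
  have hC₀0 : 0 < C₀ := lt_of_lt_of_le one_pos hC₀
  set ℓ := D.sl Q with hℓdef
  have hℓ : 0 < ℓ := sl_pos D Q
  set z := D.center Q with hz
  have hzsupp : z ∈ suppSet μ := center_mem_supp D Q
  set E := EMetric.diam (suppSet μ) with hE
  rcases eq_or_ne E ⊤ with hEtop | hEtop
  · rw [hEtop]; exact le_top
  rcases eq_or_ne E 0 with hE0 | hE0
  · -- support is a single point; contradiction with measure bounds
    exfalso
    have hsub : (suppSet μ).Subsingleton := EMetric.diam_eq_zero_iff.1 hE0
    obtain ⟨s, hs⟩ := pow_unbounded_of_one_lt (C₀ * C₀) (one_lt_two (α := ℝ))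
    obtain ⟨R, hRgen, hRmem⟩ := D.covers (D.gen Q - s) z hzsupp
    have hRQ : D.carrier R ⊆ D.carrier Q := by
      intro x hx
      have hx' : x ∈ suppSet μ := D.carrier_subset_supp R hx
      have : x = z := hsub hx' hzsupp
      rw [this]
      exact D.center_mem Q
    have h1 : ENNReal.ofReal (C₀⁻¹ * ((2:ℝ) ^ (-D.gen R)) ^ n) ≤ μ (D.carrier Q) :=
      le_trans (D.measure_lb R) (measure_mono hRQ)
    have h2 : μ (D.carrier Q) ≤ ENNReal.ofReal (C₀ * ℓ ^ n) := D.measure_ub Q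
    have h3 : C₀⁻¹ * ((2:ℝ) ^ (-D.gen R)) ^ n ≤ C₀ * ℓ ^ n := by
      have := le_trans h1 h2
      rwa [ENNReal.ofReal_le_ofReal_iff (by positivity)] at this
    have hgen : (2:ℝ) ^ (-D.gen R) = 2 ^ (s:ℤ) * ℓ := by
      rw [hRgen, hℓdef, DyadicLattice.sl, neg_sub, ← zpow_add₀ (two_ne_zero)]
      ring_nf
    rw [hgen, mul_pow] at h3
    have h2s : (2:ℝ) ^ s ≤ ((2:ℝ) ^ (s:ℤ)) ^ n := by
      rw [zpow_natCast, ← pow_mul]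
      exact pow_le_pow_right₀ one_le_two (Nat.le_mul_of_pos_right s (by omega))
    have hℓn : 0 < ℓ ^ n := by positivity
    rw [zpow_natCast] at h3 h2s
    have h4 : ((2:ℝ) ^ s) ^ n * ℓ ^ n ≤ (C₀ * C₀) * ℓ ^ n := by
      have hmul := mul_le_mul_of_nonneg_left h3 hC₀0.le
      have hcan : C₀ * C₀⁻¹ = 1 := mul_inv_cancel₀ hC₀0.ne'
      rw [← mul_assoc, hcan, one_mul, ← mul_assoc] at hmul
      linarith
    have h5 : ((2:ℝ) ^ s) ^ n ≤ C₀ * C₀ := le_of_mul_le_mul_right (by linarith) hℓn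
    linarith
  · -- support has positive finite diameter δ₀; get ℓ ≤ C₀² δ₀
    set δ₀ := E.toReal with hδ₀
    have hδ₀pos : 0 < δ₀ := ENNReal.toReal_pos hE0 hEtop
    have hsuppsub : suppSet μ ⊆ closedBall z δ₀ := by
      intro x hx
      rw [mem_closedBall, dist_edist]
      exact ENNReal.toReal_le_of_le_ofReal hδ₀pos.le
        (by rw [ENNReal.ofReal_toReal hEtop]; exact EMetric.edist_le_diam_of_mem hx hzsupp)
    have hb := (hμ z hzsupp δ₀ hδ₀pos
      (by rw [hδ₀, ENNReal.ofReal_toReal hEtop])).2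
    have h1 : ENNReal.ofReal (C₀⁻¹ * ℓ ^ n) ≤ ENNReal.ofReal (C₀ * δ₀ ^ n) := by
      refine le_trans (D.measure_lb Q) (le_trans (measure_mono ?_) hb)
      exact fun x hx => hsuppsub (D.carrier_subset_supp Q hx)
    have h2 : C₀⁻¹ * ℓ ^ n ≤ C₀ * δ₀ ^ n := by
      rwa [ENNReal.ofReal_le_ofReal_iff (by positivity)] at h1
    have h3 : ℓ ^ n ≤ (C₀ * C₀ * δ₀) ^ n := by
      have hc2 : C₀ * C₀ ≤ (C₀ * C₀) ^ n := by
        refine le_self_pow₀ ?_ (by omega)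
        nlinarith
      calc ℓ ^ n ≤ C₀ * C₀ * δ₀ ^ n := by
            have hC₀0 : (0:ℝ) < C₀ := hC₀0
            rw [inv_mul_le_iff₀ hC₀0] at h2
            nlinarith
        _ ≤ (C₀ * C₀) ^ n * δ₀ ^ n := by nlinarith [pow_pos hδ₀pos n]
        _ = (C₀ * C₀ * δ₀) ^ n := (mul_pow _ _ _).symm
    have h4 : ℓ ≤ C₀ * C₀ * δ₀ :=
      (pow_le_pow_iff_left₀ hℓ.le (by positivity) (by omega)).1 h3
    have h5 : C₀⁻¹ * C₀⁻¹ * ℓ ≤ δ₀ := by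
      rw [← mul_inv]
      rw [inv_mul_le_iff₀ (by positivity)]
      linarith
    calc ENNReal.ofReal (C₀⁻¹ * C₀⁻¹ * ℓ) ≤ ENNReal.ofReal δ₀ :=
          ENNReal.ofReal_le_ofReal h5
      _ = E := by rw [hδ₀, ENNReal.ofReal_toReal hEtop]

/-- Upper AD-regularity bound for balls centered on the support, valid for all radii
(in the presence of a dyadic lattice). -/
lemma ball_ub (hC₀ : 1 ≤ C₀) (hn : 1 ≤ n) (hμ : IsADRegular n C₀ μ)
    (D : DyadicLattice d n C₀ μ) (Q : D.Cube)
    {z : EuclideanSpace ℝ (Fin d)} {r : ℝ} (hzsupp : z ∈ suppSet μ) (hr : 0 < r) :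
    μ (closedBall z r) ≤ ENNReal.ofReal (C₀ * r ^ n) := by
  have hC₀0 : 0 < C₀ := lt_of_lt_of_le one_pos hC₀
  set E := EMetric.diam (suppSet μ) with hE
  by_cases hcase : ENNReal.ofReal r ≤ E
  · exact (hμ z hzsupp r hr hcase).2
  push_neg at hcase
  have hEtop : E ≠ ⊤ := by
    intro h
    rw [h] at hcase
    exact (not_top_lt hcase).elim
  have hE0 : E ≠ 0 := by
    have hlb := diam_supp_lb hC₀ hn hμ D Q
    intro h
    rw [← hE, h, nonpos_iff_eq_zero, ENNReal.ofReal_eq_zero] at hlb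
    have hℓ : 0 < D.sl Q := sl_pos D Q
    have : 0 < C₀⁻¹ * C₀⁻¹ * D.sl Q := by positivity
    linarith
  set δ₀ := E.toReal with hδ₀
  have hδ₀pos : 0 < δ₀ := ENNReal.toReal_pos hE0 hEtop
  have hδ₀r : δ₀ ≤ r := by
    have := (ENNReal.lt_ofReal_iff_toReal_lt hEtop).1 hcase
    linarith
  have hsuppsub : suppSet μ ⊆ closedBall z δ₀ := by
    intro x hx
    rw [mem_closedBall, dist_edist]
    exact ENNReal.toReal_le_of_le_ofReal hδ₀pos.le
      (by rw [ENNReal.ofReal_toReal hEtop]; exact EMetric.edist_le_diam_of_mem hx hzsupp)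
  have hsub : closedBall z r ⊆ closedBall z δ₀ ∪ (suppSet μ)ᶜ := by
    intro x _
    by_cases hx : x ∈ suppSet μ
    · exact Or.inl (hsuppsub hx)
    · exact Or.inr hx
  calc μ (closedBall z r) ≤ μ (closedBall z δ₀ ∪ (suppSet μ)ᶜ) := measure_mono hsub
    _ ≤ μ (closedBall z δ₀) + μ (suppSet μ)ᶜ := measure_union_le _ _
    _ = μ (closedBall z δ₀) := by rw [measure_compl_suppSet, add_zero]
    _ ≤ ENNReal.ofReal (C₀ * δ₀ ^ n) :=
        (hμ z hzsupp δ₀ hδ₀pos (by rw [hδ₀, ENNReal.ofReal_toReal hEtop])).2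
    _ ≤ ENNReal.ofReal (C₀ * r ^ n) := by
        apply ENNReal.ofReal_le_ofReal
        have : δ₀ ^ n ≤ r ^ n := pow_le_pow_left₀ hδ₀pos.le hδ₀r n
        nlinarith

set_option maxHeartbeats 1000000 in
/-- Key geometric lemma: every cube of an AD regular measure contains a point
quantitatively far from any affine subspace of dimension `< n`. -/
lemma far_point (hC₀ : 1 ≤ C₀) (hμ : IsADRegular n C₀ μ)
    (D : DyadicLattice d n C₀ μ) (Q : D.Cube)
    (L : AffineSubspace ℝ (EuclideanSpace ℝ (Fin d)))
    (hLne : (L : Set (EuclideanSpace ℝ (Fin d))).Nonempty)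
    (hdim : Module.finrank ℝ L.direction < n) :
    ∃ y ∈ D.carrier Q, (C₀ ^ 2 * 40 ^ n)⁻¹ * D.sl Q ≤ infDist y L := by
  classical
  obtain ⟨m, rfl⟩ : ∃ m, n = m + 1 := ⟨n - 1, by omega⟩
  have hn : 1 ≤ m + 1 := by omega
  have hC₀0 : 0 < C₀ := lt_of_lt_of_le one_pos hC₀
  set ε : ℝ := (C₀ ^ 2 * 40 ^ (m + 1))⁻¹ with hεdef
  have hε : 0 < ε := by rw [hεdef]; positivity
  set ℓ := D.sl Q with hℓdef
  have hℓ : 0 < ℓ := sl_pos D Q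
  set z := D.center Q with hzdef
  have hzsupp : z ∈ suppSet μ := center_mem_supp D Q
  have h40 : (40:ℝ) ≤ 40 ^ (m + 1) := le_self_pow₀ (by norm_num) (by omega)
  have hε1 : ε ≤ 1 / 40 := by
    rw [hεdef]
    rw [div_eq_mul_inv, one_mul]
    apply inv_anti₀ (by norm_num)
    nlinarith
  have h10ε : 10 * ε ≤ C₀⁻¹ * C₀⁻¹ := by
    rw [hεdef, mul_inv]
    calc 10 * ((C₀ ^ 2)⁻¹ * ((40:ℝ) ^ (m + 1))⁻¹)
        = (C₀ ^ 2)⁻¹ * (10 * ((40:ℝ) ^ (m + 1))⁻¹) := by ring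
      _ ≤ (C₀ ^ 2)⁻¹ * 1 := by
          refine mul_le_mul_of_nonneg_left ?_ (by positivity)
          rw [← div_eq_mul_inv, div_le_one (by positivity)]
          linarith
      _ = C₀⁻¹ * C₀⁻¹ := by rw [mul_one, pow_two, mul_inv]
  have hdiam : ∀ r : ℝ, 0 < r → r ≤ 10 * ε * ℓ →
      ENNReal.ofReal r ≤ EMetric.diam (suppSet μ) := by
    intro r hr hrle
    refine le_trans (ENNReal.ofReal_le_ofReal ?_) (diam_supp_lb hC₀ hn hμ D Q)
    have := mul_le_mul_of_nonneg_right h10ε hℓ.le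
    calc r ≤ 10 * ε * ℓ := hrle
      _ ≤ C₀⁻¹ * C₀⁻¹ * ℓ := this
      _ = C₀⁻¹ * C₀⁻¹ * D.sl Q := by rw [hℓdef]
  by_contra hcon
  push_neg at hcon
  have h : ∀ y ∈ D.carrier Q, infDist y L < ε * ℓ := fun y hy => hcon y hy
  -- the family of `10 ε ℓ`-separated finite subsets of `Q`
  set IsSep : Finset (EuclideanSpace ℝ (Fin d)) → Prop :=
    fun P => (↑P ⊆ D.carrier Q) ∧
      ∀ p ∈ P, ∀ q ∈ P, p ≠ q → 10 * ε * ℓ ≤ dist p q with hIsSep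
  -- cardinality bound via disjoint balls
  have claim1 : ∀ P, IsSep P → (P.card : ℝ) ≤ C₀ ^ 2 * (2 * ℓ) ^ (m+1) / (4 * ε * ℓ) ^ (m+1) := by
    rintro P ⟨hPQ, hPsep⟩
    have hdisj : (↑P : Set (EuclideanSpace ℝ (Fin d))).PairwiseDisjoint
        (fun p => closedBall p (4 * ε * ℓ)) := by
      intro p hp q hq hpq
      refine closedBall_disjoint_closedBall ?_
      have := hPsep p hp q hq hpq
      nlinarith [mul_pos hε hℓ]
    have hlow : ∀ p ∈ P, ENNReal.ofReal (C₀⁻¹ * (4 * ε * ℓ) ^ (m+1))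
        ≤ μ (closedBall p (4 * ε * ℓ)) := by
      intro p hp
      have hpsupp : p ∈ suppSet μ := D.carrier_subset_supp Q (hPQ hp)
      have hrpos : 0 < 4 * ε * ℓ := by positivity
      exact (hμ p hpsupp _ hrpos (hdiam _ hrpos (by nlinarith [mul_pos hε hℓ]))).1
    have hsub : (⋃ p ∈ P, closedBall p (4 * ε * ℓ)) ⊆ closedBall z (2 * ℓ) := by
      intro x hx
      simp only [mem_iUnion, exists_prop] at hx
      obtain ⟨p, hp, hxp⟩ := hx
      rw [mem_closedBall] at hxp ⊢
      have hpz : dist p z ≤ ℓ := carrier_subset_closedBall D Q (hPQ hp)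
      have : dist x z ≤ dist x p + dist p z := dist_triangle _ _ _
      nlinarith [hε1, hℓ]
    have hchain : (P.card : ℝ≥0∞) * ENNReal.ofReal (C₀⁻¹ * (4 * ε * ℓ) ^ (m+1))
        ≤ ENNReal.ofReal (C₀ * (2 * ℓ) ^ (m+1)) := by
      calc (P.card : ℝ≥0∞) * ENNReal.ofReal (C₀⁻¹ * (4 * ε * ℓ) ^ (m+1))
          = ∑ p ∈ P, ENNReal.ofReal (C₀⁻¹ * (4 * ε * ℓ) ^ (m+1)) := by
            rw [Finset.sum_const, nsmul_eq_mul]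
        _ ≤ ∑ p ∈ P, μ (closedBall p (4 * ε * ℓ)) := Finset.sum_le_sum hlow
        _ = μ (⋃ p ∈ P, closedBall p (4 * ε * ℓ)) :=
            (measure_biUnion_finset hdisj fun p _ => measurableSet_closedBall).symm
        _ ≤ μ (closedBall z (2 * ℓ)) := measure_mono hsub
        _ ≤ ENNReal.ofReal (C₀ * (2 * ℓ) ^ (m+1)) :=
            ball_ub hC₀ hn hμ D Q hzsupp (by positivity)
    have hreal : (P.card : ℝ) * (C₀⁻¹ * (4 * ε * ℓ) ^ (m+1)) ≤ C₀ * (2 * ℓ) ^ (m+1) := by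
      have h1 : (P.card : ℝ≥0∞) = ENNReal.ofReal (P.card : ℝ) := by simp
      rw [h1, ← ENNReal.ofReal_mul (by positivity)] at hchain
      exact (ENNReal.ofReal_le_ofReal_iff (by positivity)).1 hchain
    rw [le_div_iff₀ (by positivity)]
    calc (P.card : ℝ) * (4 * ε * ℓ) ^ (m+1)
        = C₀ * ((P.card : ℝ) * (C₀⁻¹ * (4 * ε * ℓ) ^ (m+1))) := by
          field_simp
      _ ≤ C₀ * (C₀ * (2 * ℓ) ^ (m+1)) := by
          exact mul_le_mul_of_nonneg_left hreal hC₀0.le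
      _ = C₀ ^ 2 * (2 * ℓ) ^ (m+1) := by ring
  -- a separated set of maximal cardinality
  set B : ℝ := C₀ ^ 2 * (2 * ℓ) ^ (m+1) / (4 * ε * ℓ) ^ (m+1) with hB
  set Γ : Set ℕ := {c | ∃ P, IsSep P ∧ P.card = c} with hΓ
  have hΓ0 : 0 ∈ Γ := ⟨∅, ⟨by simp [hIsSep], by simp⟩, rfl⟩
  have hΓbdd : BddAbove Γ := by
    refine ⟨⌈B⌉₊, fun c hc => ?_⟩
    obtain ⟨P, hP, rfl⟩ := hc
    have h1 : (P.card : ℝ) ≤ B := claim1 P hP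
    exact_mod_cast h1.trans (Nat.le_ceil B)
  set M := sSup Γ with hM
  have hMΓ : M ∈ Γ := Nat.sSup_mem ⟨0, hΓ0⟩ hΓbdd
  obtain ⟨P, hPsep, hPcard⟩ := hMΓ
  -- maximality: every point of Q is close to P
  have hmax : ∀ y ∈ D.carrier Q, ∃ p ∈ P, dist y p < 10 * ε * ℓ := by
    intro y hy
    by_contra hcon2
    push_neg at hcon2
    have hyP : y ∉ P := by
      intro hyP
      have := hcon2 y hyP
      rw [dist_self] at this
      nlinarith [mul_pos hε hℓ]
    have hins : IsSep (insert y P) := by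
      constructor
      · intro x hx
        rcases Finset.mem_insert.1 hx with rfl | hx
        · exact hy
        · exact hPsep.1 hx
      · intro p hp q hq hpq
        rcases Finset.mem_insert.1 hp with rfl | hp'
        · rcases Finset.mem_insert.1 hq with rfl | hq'
          · exact absurd rfl hpq
          · exact hcon2 q hq'
        · rcases Finset.mem_insert.1 hq with rfl | hq'
          · rw [dist_comm]
            exact hcon2 p hp'
          · exact hPsep.2 p hp' q hq' hpq
    have hM1 : M + 1 ∈ Γ :=
      ⟨insert y P, hins, by rw [Finset.card_insert_of_notMem hyP, hPcard]⟩
    have := le_csSup hΓbdd hM1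
    omega
  -- coverage lower bound on M
  have hfin1 : C₀⁻¹ * ℓ ^ (m+1) ≤ (M : ℝ) * (C₀ * (10 * ε * ℓ) ^ (m+1)) := by
    have hsub : D.carrier Q ⊆ ⋃ p ∈ P, closedBall p (10 * ε * ℓ) := by
      intro y hy
      obtain ⟨p, hp, hd⟩ := hmax y hy
      exact mem_biUnion hp (mem_closedBall.2 hd.le)
    have hchain : ENNReal.ofReal (C₀⁻¹ * ℓ ^ (m+1))
        ≤ (M : ℝ≥0∞) * ENNReal.ofReal (C₀ * (10 * ε * ℓ) ^ (m+1)) := by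
      calc ENNReal.ofReal (C₀⁻¹ * ℓ ^ (m+1)) ≤ μ (D.carrier Q) := D.measure_lb Q
        _ ≤ μ (⋃ p ∈ P, closedBall p (10 * ε * ℓ)) := measure_mono hsub
        _ ≤ ∑ p ∈ P, μ (closedBall p (10 * ε * ℓ)) := measure_biUnion_finset_le _ _
        _ ≤ ∑ p ∈ P, ENNReal.ofReal (C₀ * (10 * ε * ℓ) ^ (m+1)) := by
            refine Finset.sum_le_sum fun p hp => ?_
            have hpsupp : p ∈ suppSet μ := D.carrier_subset_supp Q (hPsep.1 hp)
            have hrpos : 0 < 10 * ε * ℓ := by positivity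
            exact (hμ p hpsupp _ hrpos (hdiam _ hrpos le_rfl)).2
        _ = (M : ℝ≥0∞) * ENNReal.ofReal (C₀ * (10 * ε * ℓ) ^ (m+1)) := by
            rw [Finset.sum_const, nsmul_eq_mul, hPcard]
    have h1 : (M : ℝ≥0∞) = ENNReal.ofReal (M : ℝ) := by simp
    rw [h1, ← ENNReal.ofReal_mul (by positivity)] at hchain
    exact (ENNReal.ofReal_le_ofReal_iff (by positivity)).1 hchain
  -- P is nonempty
  have hMpos : 0 < M := by
    rcases Nat.eq_zero_or_pos M with h0 | hpos
    · exfalso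
      rw [h0] at hfin1
      simp only [Nat.cast_zero, zero_mul] at hfin1
      nlinarith [pow_pos hℓ (m+1), inv_pos.2 hC₀0]
    · exact hpos
  obtain ⟨p₀, hp₀⟩ := Finset.card_pos.1 (hPcard ▸ hMpos)
  -- nearest points on L
  have hLclosed : IsClosed (L : Set (EuclideanSpace ℝ (Fin d))) :=
    L.closed_of_finiteDimensional
  have hqex : ∀ p : EuclideanSpace ℝ (Fin d), ∃ q ∈ (L : Set (EuclideanSpace ℝ (Fin d))),
      infDist p (L : Set (EuclideanSpace ℝ (Fin d))) = dist p q :=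
    fun p => hLclosed.exists_infDist_eq_dist hLne p
  choose q hqL hqdist using hqex
  have hqclose : ∀ p ∈ P, dist p (q p) < ε * ℓ := by
    intro p hp
    rw [← hqdist p]
    exact h p (hPsep.1 hp)
  have hqsep : ∀ p ∈ P, ∀ p' ∈ P, p ≠ p' → 8 * ε * ℓ ≤ dist (q p) (q p') := by
    intro p hp p' hp' hpp'
    have h1 := hPsep.2 p hp p' hp' hpp'
    have h2 := hqclose p hp
    have h3 := hqclose p' hp'
    have h4 : dist p p' ≤ dist p (q p) + dist (q p) (q p') + dist (q p') p' :=
      dist_triangle4 _ _ _ _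
    have h5 : dist (q p') p' = dist p' (q p') := dist_comm _ _
    linarith
  have hqrad : ∀ p ∈ P, dist (q p) (q p₀) ≤ 4 * ℓ := by
    intro p hp
    have h1 : dist (q p) (q p₀) ≤ dist (q p) p + dist p p₀ + dist p₀ (q p₀) :=
      dist_triangle4 _ _ _ _
    have h2 : dist p p₀ ≤ dist p z + dist p₀ z := dist_triangle_right _ _ _
    have h3 : dist p z ≤ ℓ := carrier_subset_closedBall D Q (hPsep.1 hp)
    have h4 : dist p₀ z ≤ ℓ := carrier_subset_closedBall D Q (hPsep.1 hp₀)
    have h5 : dist (q p) p = dist p (q p) := dist_comm _ _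
    have h6 := hqclose p hp
    have h7 := hqclose p₀ hp₀
    have h8 : ε * ℓ ≤ (1/40) * ℓ := mul_le_mul_of_nonneg_right hε1 hℓ.le
    linarith
  -- packing bound on M via the plane L
  have hqinj : Set.InjOn q ↑P := by
    intro p hp p' hp' hq
    by_contra hne
    have := hqsep p hp p' hp' hne
    rw [hq, dist_self] at this
    nlinarith [mul_pos hε hℓ]
  set P' : Finset (EuclideanSpace ℝ (Fin d)) := P.image q with hP'
  have hP'card : P'.card = M := by rw [hP', Finset.card_image_of_injOn hqinj, hPcard]
  have hfin2 : (M : ℝ) ≤ (2 * (4 * ℓ) / (8 * ε * ℓ) + 1) ^ m := by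
    rw [← hP'card]
    refine affine_packing (by positivity) (by positivity) L (by omega) (q p₀) (hqL p₀) P'
      ?_ ?_ ?_
    · intro p hp
      rw [hP', Finset.mem_image] at hp
      obtain ⟨p', _, rfl⟩ := hp
      exact hqL p'
    · intro p hp
      rw [hP', Finset.mem_image] at hp
      obtain ⟨p', hp', rfl⟩ := hp
      exact hqrad p' hp'
    · intro a ha b hb hab
      rw [hP', Finset.mem_image] at ha hb
      obtain ⟨p, hp, rfl⟩ := ha
      obtain ⟨p', hp', rfl⟩ := hb
      exact hqsep p hp p' hp' (fun hh => hab (by rw [hh]))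
  -- simplify the packing bound
  have hsimp : 2 * (4 * ℓ) / (8 * ε * ℓ) + 1 ≤ 2 / ε := by
    have h1 : 2 * (4 * ℓ) / (8 * ε * ℓ) = 1 / ε := by
      field_simp
      ring
    rw [h1]
    rw [div_add' _ _ _ hε.ne', div_le_div_iff₀ hε hε]
    nlinarith
  have hfin2' : (M : ℝ) ≤ (2 / ε) ^ m := by
    refine hfin2.trans (pow_le_pow_left₀ (by positivity) hsimp m)
  -- final contradiction
  have e1 : (2 / ε) ^ m * (C₀ * (10 * ε * ℓ) ^ (m+1))
      = (C₀ * 2 ^ m * 10 ^ (m+1) * ε) * ℓ ^ (m+1) := by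
    rw [div_pow, mul_pow, mul_pow]
    rw [pow_succ ε m]
    field_simp
  have e2 : C₀⁻¹ * ℓ ^ (m+1) ≤ (C₀ * 2 ^ m * 10 ^ (m+1) * ε) * ℓ ^ (m+1) := by
    rw [← e1]
    refine hfin1.trans (mul_le_mul_of_nonneg_right hfin2' (by positivity))
  have e3 : C₀⁻¹ ≤ C₀ * 2 ^ m * 10 ^ (m+1) * ε :=
    le_of_mul_le_mul_right e2 (pow_pos hℓ (m+1))
  have e4 : 1 ≤ C₀ ^ 2 * 2 ^ m * 10 ^ (m+1) * ε := by
    have hcan : C₀ * C₀⁻¹ = 1 := mul_inv_cancel₀ hC₀0.ne'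
    have := mul_le_mul_of_nonneg_left e3 hC₀0.le
    rw [hcan] at this
    nlinarith
  have e5 : C₀ ^ 2 * 2 ^ m * 10 ^ (m+1) * ε = 2 ^ m * 10 ^ (m+1) / 40 ^ (m+1) := by
    rw [hεdef]
    field_simp
  have e6 : (2:ℝ) ^ m * 10 ^ (m+1) / 40 ^ (m+1) ≤ 1 / 2 := by
    rw [div_le_iff₀ (by positivity)]
    have h20 : ((20:ℝ)) ^ (m+1) = 2 ^ (m+1) * 10 ^ (m+1) := by
      rw [← mul_pow]; norm_num
    have h2040 : ((20:ℝ)) ^ (m+1) ≤ 40 ^ (m+1) :=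
      pow_le_pow_left₀ (by norm_num) (by norm_num) _
    rw [pow_succ (2:ℝ) m] at h20
    nlinarith
  rw [e5] at e4
  linarith

end Aux

/-- well-spread points. For any dyadic cube `Q` of an `n`-dimensional AD
regular measure there are `n+1` points `x₀, …, x_n ∈ Q` with
`dist(x_j, L_{j−1}) ≥ C⁻¹ ℓ(Q)`, where `L_{j-1}` is the affine span of `x₀, …, x_{j−1}`
and `C` depends only on `n` and the AD-regularity constant. -/
theorem stmt17 (n : ℕ) (C₀ : ℝ) (hC₀ : 1 ≤ C₀) :
    ∃ C : ℝ, 0 < C ∧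
      ∀ (d : ℕ) (μ : Measure (EuclideanSpace ℝ (Fin d))), IsADRegular n C₀ μ →
        ∀ (D : DyadicLattice d n C₀ μ) (Q : D.Cube),
          ∃ x : Fin (n + 1) → EuclideanSpace ℝ (Fin d),
            (∀ j, x j ∈ D.carrier Q) ∧
            ∀ j : Fin (n + 1), 0 < (j : ℕ) →
              C⁻¹ * D.sl Q ≤
                infDist (x j)
                  ((affineSpan ℝ (x '' {i : Fin (n + 1) | (i : ℕ) < (j : ℕ)}) :
                    AffineSubspace ℝ (EuclideanSpace ℝ (Fin d))) :
                    Set (EuclideanSpace ℝ (Fin d))) := by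
  have hC₀0 : 0 < C₀ := lt_of_lt_of_le one_pos hC₀
  refine ⟨C₀ ^ 2 * 40 ^ n, by positivity, ?_⟩
  intro d μ hμ D Q
  have key : ∀ m : ℕ, m ≤ n → ∃ x : Fin (m + 1) → EuclideanSpace ℝ (Fin d),
      (∀ j, x j ∈ D.carrier Q) ∧
      ∀ j : Fin (m + 1), 0 < (j : ℕ) →
        (C₀ ^ 2 * 40 ^ n)⁻¹ * D.sl Q ≤
          infDist (x j)
            ((affineSpan ℝ (x '' {i : Fin (m + 1) | (i : ℕ) < (j : ℕ)}) :
              AffineSubspace ℝ (EuclideanSpace ℝ (Fin d))) :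
              Set (EuclideanSpace ℝ (Fin d))) := by
    intro m
    induction m with
    | zero =>
      intro _
      refine ⟨fun _ => D.center Q, fun _ => D.center_mem Q, ?_⟩
      intro j hj
      have : (j : ℕ) = 0 := Nat.lt_one_iff.1 j.isLt
      omega
    | succ m ih =>
      intro hm1
      obtain ⟨x, hx1, hx2⟩ := ih (by omega)
      set L := affineSpan ℝ (Set.range x) with hL
      have hLne : (L : Set (EuclideanSpace ℝ (Fin d))).Nonempty :=
        ⟨x 0, subset_affineSpan ℝ _ ⟨0, rfl⟩⟩
      have hdim : Module.finrank ℝ L.direction < n := by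
        rw [hL, direction_affineSpan]
        have := finrank_vectorSpan_range_le ℝ x (by simp : Fintype.card (Fin (m+1)) = m + 1)
        omega
      obtain ⟨y, hyQ, hyfar⟩ := far_point hC₀ hμ D Q L hLne hdim
      refine ⟨Fin.snoc x y, ?_, ?_⟩
      · intro j
        refine Fin.lastCases ?_ ?_ j
        · rw [Fin.snoc_last]; exact hyQ
        · intro i; rw [Fin.snoc_castSucc]; exact hx1 i
      · intro j
        refine Fin.lastCases ?_ ?_ j
        · intro _
          have him : (Fin.snoc x y : Fin (m + 2) → EuclideanSpace ℝ (Fin d)) ''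
              {i : Fin (m + 2) | (i : ℕ) < ((Fin.last (m+1) : Fin (m+2)) : ℕ)}
              = Set.range x := by
            ext w
            simp only [mem_image, mem_setOf_eq, Set.mem_range, Fin.val_last]
            constructor
            · rintro ⟨i, hi, rfl⟩
              refine ⟨⟨(i : ℕ), hi⟩, ?_⟩
              have hcast : Fin.castSucc (⟨(i : ℕ), hi⟩ : Fin (m+1)) = i := by
                apply Fin.ext; simp
              conv_rhs => rw [← hcast]
              rw [Fin.snoc_castSucc]
            · rintro ⟨i, rfl⟩
              exact ⟨Fin.castSucc i, by simpa using i.isLt, by rw [Fin.snoc_castSucc]⟩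
          rw [him, Fin.snoc_last]
          exact hyfar
        · intro i hi
          have hival : ((Fin.castSucc i : Fin (m+2)) : ℕ) = (i : ℕ) := rfl
          have him : (Fin.snoc x y : Fin (m + 2) → EuclideanSpace ℝ (Fin d)) ''
              {i' : Fin (m + 2) | (i' : ℕ) < ((Fin.castSucc i : Fin (m+2)) : ℕ)}
              = x '' {i' : Fin (m + 1) | (i' : ℕ) < (i : ℕ)} := by
            ext w
            simp only [mem_image, mem_setOf_eq, hival]
            constructor
            · rintro ⟨i', hi', rfl⟩
              have hlt : (i' : ℕ) < m + 1 := lt_of_lt_of_le hi' (by omega)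
              refine ⟨⟨(i' : ℕ), hlt⟩, by simpa using hi', ?_⟩
              have hcast : Fin.castSucc (⟨(i' : ℕ), hlt⟩ : Fin (m+1)) = i' := by
                apply Fin.ext; simp
              conv_rhs => rw [← hcast]
              rw [Fin.snoc_castSucc]
            · rintro ⟨i', hi', rfl⟩
              exact ⟨Fin.castSucc i', by simpa using hi', by rw [Fin.snoc_castSucc]⟩
          rw [him, Fin.snoc_castSucc]
          exact hx2 i (by omega)
  obtain ⟨x, hx1, hx2⟩ := key n le_rfl
  exact ⟨x, hx1, hx2⟩
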